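/- Let v ∈ P and let ω ∈ Γ be a common solution, i.e., ω simultaneously attains max_{ω'∈Γ} g̃_v(ω') and max_{ω'∈Γ} g̃_v^{(j)}(ω') for every j ∈ {1,…,L}. Then ω satisfies the pseudo-balanced condition for v. (Lemma 11 of the paper.) -/

import Mathlib

open Finset
open scoped Classical

namespace HetTS

noncomputable section

variable {K M : ℕ}

/-- Number of clients having access to arm `i`. -/
def Mi (S : Fin M → Finset (Fin K)) (i : Fin K) : ℕ :=
  (Finset.univ.filter fun m => i ∈ S m).card

/-- The mean reward `μ_i(v)` of arm `i`: average of the means of arm `i` across the clients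
having access to it. -/
def armMean (S : Fin M → Finset (Fin K)) (v : Fin M → Fin K → ℝ) (i : Fin K) : ℝ :=
  (1 / (Mi S i : ℝ)) * ∑ m ∈ Finset.univ.filter (fun m => i ∈ S m), v m i

/-- Arm `i` is the (unique) best arm of client `m` under instance `v`. -/
def isBest (S : Fin M → Finset (Fin K)) (v : Fin M → Fin K → ℝ) (m : Fin M) (i : Fin K) :
    Prop :=
  i ∈ S m ∧ ∀ j ∈ S m, j ≠ i → armMean S v j < armMean S v i

/-- The set `P` of problem instances having a unique best arm at each client. -/
def PSet (S : Fin M → Finset (Fin K)) : Set (Fin M → Fin K → ℝ) :=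
  {v | ∀ m, ∃ i, isBest S v m i}

/-- The set of alternative instances `Alt(v)`: instances in `P` whose tuple of best arms
differs from that of `v`. -/
def AltSet (S : Fin M → Finset (Fin K)) (v : Fin M → Fin K → ℝ) :
    Set (Fin M → Fin K → ℝ) :=
  {v' | v' ∈ PSet S ∧ ¬ ∀ (m : Fin M) (i : Fin K), isBest S v m i ↔ isBest S v' m i}

/-- The set `Γ` of allocations: families `(ω_{i,m})_{m, i ∈ S_m}` of nonnegative weights
summing to one for each client (represented as functions vanishing off the support). -/
def Gam (S : Fin M → Finset (Fin K)) : Set (Fin M → Fin K → ℝ) :=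
  {ω | (∀ m, ∀ i ∈ S m, 0 ≤ ω m i) ∧ (∀ m, ∑ i ∈ S m, ω m i = 1) ∧
    ∀ m, ∀ i, i ∉ S m → ω m i = 0}

/-- `g_v(ω)`, the inner infimum over alternative instances. -/
def gfun (S : Fin M → Finset (Fin K)) (v ω : Fin M → Fin K → ℝ) : ℝ :=
  sInf {x | ∃ v' ∈ AltSet S v,
    x = ∑ m : Fin M, ∑ i ∈ S m, ω m i * (v m i - v' m i) ^ 2 / 2}

/-- The gap `Δ_i(v)`. -/
def Delta (S : Fin M → Finset (Fin K)) (v : Fin M → Fin K → ℝ) (i : Fin K) : ℝ :=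
  sInf {x | ∃ m : Fin M, i ∈ S m ∧
    x = |armMean S v i - sSup {y | ∃ j ∈ S m, j ≠ i ∧ y = armMean S v j}|}

/-- The denominator `(1/M_i²) ∑_{m : i ∈ S_m} 1/ω_{i,m}`. -/
def armDenom (S : Fin M → Finset (Fin K)) (ω : Fin M → Fin K → ℝ) (i : Fin K) : ℝ :=
  (1 / (Mi S i : ℝ) ^ 2) * ∑ m ∈ Finset.univ.filter (fun m => i ∈ S m), 1 / ω m i

/-- The simplified objective `g̃_v(ω)`. -/
def gtilde (S : Fin M → Finset (Fin K)) (v ω : Fin M → Fin K → ℝ) : ℝ :=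
  if ∃ m, ∃ i ∈ S m, ω m i = 0 then 0
  else sInf {x | ∃ i : Fin K, x = (Delta S v i) ^ 2 / 2 / armDenom S ω i}

/-- The relation `R` on arms: two arms are related if some client has access to both. -/
def armRel (S : Fin M → Finset (Fin K)) (i₁ i₂ : Fin K) : Prop :=
  ∃ m, i₁ ∈ S m ∧ i₂ ∈ S m

/-- The equivalence class `Q` of arm `i` under the smallest equivalence relation
containing `R`. -/
def armClass (S : Fin M → Finset (Fin K)) (i : Fin K) : Set (Fin K) :=
  {i' | Relation.EqvGen (armRel S) i i'}

/-- Same equivalence class, as a `Finset`. -/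
def classFinset (S : Fin M → Finset (Fin K)) (i : Fin K) : Finset (Fin K) :=
  Finset.univ.filter fun i' => Relation.EqvGen (armRel S) i i'

/-- The per-class objective `g̃_v^{(j)}(ω)` where `Q` is the `j`-th equivalence class. -/
def gtildeC (S : Fin M → Finset (Fin K)) (v : Fin M → Fin K → ℝ) (Q : Set (Fin K))
    (ω : Fin M → Fin K → ℝ) : ℝ :=
  if ∃ m, ∃ i ∈ S m, i ∈ Q ∧ ω m i = 0 then 0
  else sInf {x | ∃ i ∈ Q, x = (Delta S v i) ^ 2 / armDenom S ω i}

/-- `ω` is a common solution: it simultaneously attains `max_{ω'∈Γ} g̃_v(ω')` and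
`max_{ω'∈Γ} g̃_v^{(j)}(ω')` for every equivalence class `Q_j`. -/
def IsCommonSol (S : Fin M → Finset (Fin K)) (v ω : Fin M → Fin K → ℝ) : Prop :=
  ω ∈ Gam S ∧ (∀ ω' ∈ Gam S, gtilde S v ω' ≤ gtilde S v ω) ∧
    ∀ i : Fin K, ∀ ω' ∈ Gam S,
      gtildeC S v (armClass S i) ω' ≤ gtildeC S v (armClass S i) ω

/-- The balanced condition. -/
def BalancedCond (S : Fin M → Finset (Fin K)) (ω : Fin M → Fin K → ℝ) : Prop :=
  ∀ m₁ m₂ : Fin M, ∀ i₁ i₂ : Fin K, i₁ ∈ S m₁ → i₂ ∈ S m₁ → i₁ ∈ S m₂ → i₂ ∈ S m₂ →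
    ω m₁ i₁ / ω m₁ i₂ = ω m₂ i₁ / ω m₂ i₂

/-- The pseudo-balanced condition for instance `v`. -/
def PseudoBalancedCond (S : Fin M → Finset (Fin K)) (v ω : Fin M → Fin K → ℝ) : Prop :=
  ∀ i₁ i₂ : Fin K, Relation.EqvGen (armRel S) i₁ i₂ →
    (Delta S v i₁) ^ 2 / armDenom S ω i₁ = (Delta S v i₂) ^ 2 / armDenom S ω i₂

/-- The matrix `H(v)` (restricted to a class it gives `H^{(j)}(v)`). -/
def Hmat (S : Fin M → Finset (Fin K)) (v : Fin M → Fin K → ℝ) (i₁ i₂ : Fin K) : ℝ :=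
  (1 / ((Delta S v i₁) ^ 2 * (Mi S i₁ : ℝ) ^ 2)) *
    ((Finset.univ.filter fun m => i₁ ∈ S m ∧ i₂ ∈ S m).card : ℝ)

/-! ### Auxiliary material for Lemma 11 -/

/-- The per-arm objective. -/
def Fobj (S : Fin M → Finset (Fin K)) (v ω : Fin M → Fin K → ℝ) (i : Fin K) : ℝ :=
  (Delta S v i) ^ 2 / armDenom S ω i

lemma setOf_eq_image {ι : Type*} [Fintype ι] (p : ι → Prop) (g : ι → ℝ) :
    {x | ∃ m, p m ∧ x = g m} = ↑((Finset.univ.filter p).image g) := by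
  ext x
  simp only [Set.mem_setOf_eq, Finset.coe_image, Set.mem_image, Finset.mem_coe,
    Finset.mem_filter, Finset.mem_univ, true_and]
  exact ⟨fun ⟨m, hm, hx⟩ => ⟨m, hm, hx.symm⟩, fun ⟨m, hm, hx⟩ => ⟨m, hm, hx.symm⟩⟩

lemma Mi_pos (S : Fin M → Finset (Fin K)) {i : Fin K} (h : ∃ m, i ∈ S m) :
    0 < Mi S i := by
  obtain ⟨m, hm⟩ := h
  exact Finset.card_pos.mpr ⟨m, by simp [hm]⟩

lemma armDenom_pos (S : Fin M → Finset (Fin K)) (ω : Fin M → Fin K → ℝ) {i : Fin K}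
    (h : ∃ m, i ∈ S m) (hpos : ∀ m, i ∈ S m → 0 < ω m i) :
    0 < armDenom S ω i := by
  have hM : (0 : ℝ) < (Mi S i : ℝ) := by exact_mod_cast Mi_pos S h
  obtain ⟨m, hm⟩ := h
  have hmem : m ∈ Finset.univ.filter (fun m => i ∈ S m) := by simp [hm]
  refine mul_pos (by positivity) (Finset.sum_pos ?_ ⟨m, hmem⟩)
  intro m' hm'
  have : i ∈ S m' := (Finset.mem_filter.mp hm').2
  have := hpos m' this
  positivity

lemma delta_pos (S : Fin M → Finset (Fin K)) (v : Fin M → Fin K → ℝ)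
    (hS : ∀ m, 2 ≤ (S m).card) (hcov : ∀ i : Fin K, ∃ m, i ∈ S m)
    (hv : v ∈ PSet S) (i : Fin K) : 0 < Delta S v i := by
  have hT : ((Finset.univ.filter fun m => i ∈ S m).image
      (fun m => |armMean S v i - sSup {y | ∃ j ∈ S m, j ≠ i ∧ y = armMean S v j}|)).Nonempty := by
    obtain ⟨m, hm⟩ := hcov i
    exact ⟨_, Finset.mem_image_of_mem _ (show m ∈ Finset.univ.filter fun m => i ∈ S m by simp [hm])⟩
  have hrw : Delta S v i = sInf ↑((Finset.univ.filter fun m => i ∈ S m).image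
      (fun m => |armMean S v i - sSup {y | ∃ j ∈ S m, j ≠ i ∧ y = armMean S v j}|)) := by
    rw [Delta, setOf_eq_image]; congr!
  rw [hrw, hT.csInf_eq_min']
  obtain ⟨m, hmem, hval⟩ := Finset.mem_image.mp (Finset.min'_mem _ hT)
  have hm : i ∈ S m := by simpa using (Finset.mem_filter.mp hmem).2
  rw [← hval]
  -- now show the element for client `m` is positive
  have herase : ((S m).erase i).Nonempty := by
    have h2 := hS m
    have : 1 ≤ ((S m).erase i).card := by
      rw [Finset.card_erase_of_mem hm]; omega
    exact Finset.card_pos.mp (by omega)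
  have hne' : (((S m).erase i).image (armMean S v)).Nonempty := herase.image _
  have hsetS : {y | ∃ j ∈ S m, j ≠ i ∧ y = armMean S v j}
      = ↑(((S m).erase i).image (armMean S v)) := by
    ext y
    simp only [Set.mem_setOf_eq, Finset.coe_image, Set.mem_image, Finset.mem_coe,
      Finset.mem_erase]
    exact ⟨fun ⟨j, hj, hne, hy⟩ => ⟨j, ⟨hne, hj⟩, hy.symm⟩,
      fun ⟨j, ⟨hne, hj⟩, hy⟩ => ⟨j, hj, hne, hy.symm⟩⟩
  rw [hsetS, hne'.csSup_eq_max']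
  obtain ⟨b, hbS, hbbest⟩ := hv m
  obtain ⟨j, hj, hjeq⟩ := Finset.mem_image.mp (Finset.max'_mem _ hne')
  obtain ⟨hjne, hjS⟩ := Finset.mem_erase.mp hj
  rw [abs_pos, sub_ne_zero]
  by_cases hib : i = b
  · -- i is the best arm at m : the max over the others is strictly smaller
    have hlt := hbbest j hjS (by rw [← hib]; exact hjne)
    rw [← hib] at hlt
    rw [← hjeq]
    exact ne_of_gt hlt
  · -- i is not best: the max is at least the best arm's mean, which is bigger
    have hlt := hbbest i hm hib
    have hble : armMean S v b ≤ (((S m).erase i).image (armMean S v)).max' hne' :=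
      Finset.le_max' _ _ (Finset.mem_image_of_mem _
        (Finset.mem_erase.mpr ⟨fun h => hib h.symm, hbS⟩))
    exact ne_of_lt (lt_of_lt_of_le hlt hble)

lemma gtildeC_eq_sInf (S : Fin M → Finset (Fin K)) (v : Fin M → Fin K → ℝ) (i₀ : Fin K)
    (w : Fin M → Fin K → ℝ)
    (hpos : ∀ m, ∀ i ∈ S m, i ∈ armClass S i₀ → w m i ≠ 0) :
    gtildeC S v (armClass S i₀) w
      = sInf ↑((Finset.univ.filter (· ∈ armClass S i₀)).image (Fobj S v w)) := by
  rw [gtildeC, if_neg]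
  · rw [show {x | ∃ i ∈ armClass S i₀, x = Delta S v i ^ 2 / armDenom S w i}
        = {x | ∃ i, (· ∈ armClass S i₀) i ∧ x = Fobj S v w i} from rfl, setOf_eq_image]
  · rintro ⟨m, i, hi, hQ, h0⟩
    exact hpos m i hi hQ h0

lemma QfF_nonempty (S : Fin M → Finset (Fin K)) (v : Fin M → Fin K → ℝ) (i₀ : Fin K)
    (w : Fin M → Fin K → ℝ) :
    ((Finset.univ.filter (· ∈ armClass S i₀)).image (Fobj S v w)).Nonempty :=
  ⟨_, Finset.mem_image_of_mem _ (Finset.mem_filter.mpr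
    ⟨Finset.mem_univ i₀, Relation.EqvGen.refl i₀⟩)⟩

lemma gtildeC_le (S : Fin M → Finset (Fin K)) (v : Fin M → Fin K → ℝ) (i₀ : Fin K)
    (w : Fin M → Fin K → ℝ)
    (hpos : ∀ m, ∀ i ∈ S m, i ∈ armClass S i₀ → w m i ≠ 0)
    {i : Fin K} (hi : i ∈ armClass S i₀) :
    gtildeC S v (armClass S i₀) w ≤ Fobj S v w i := by
  rw [gtildeC_eq_sInf S v i₀ w hpos, (QfF_nonempty S v i₀ w).csInf_eq_min']
  exact Finset.min'_le _ _ (Finset.mem_image_of_mem _ (Finset.mem_filter.mpr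
    ⟨Finset.mem_univ i, hi⟩))

lemma le_gtildeC (S : Fin M → Finset (Fin K)) (v : Fin M → Fin K → ℝ) (i₀ : Fin K)
    (w : Fin M → Fin K → ℝ)
    (hpos : ∀ m, ∀ i ∈ S m, i ∈ armClass S i₀ → w m i ≠ 0)
    {x : ℝ} (h : ∀ i ∈ armClass S i₀, x ≤ Fobj S v w i) :
    x ≤ gtildeC S v (armClass S i₀) w := by
  rw [gtildeC_eq_sInf S v i₀ w hpos, (QfF_nonempty S v i₀ w).csInf_eq_min']
  refine Finset.le_min' _ _ _ ?_
  intro y hy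
  obtain ⟨i, hi, rfl⟩ := Finset.mem_image.mp hy
  exact h i (Finset.mem_filter.mp hi).2

lemma gtildeC_mem (S : Fin M → Finset (Fin K)) (v : Fin M → Fin K → ℝ) (i₀ : Fin K)
    (w : Fin M → Fin K → ℝ)
    (hpos : ∀ m, ∀ i ∈ S m, i ∈ armClass S i₀ → w m i ≠ 0) :
    ∃ i ∈ armClass S i₀, gtildeC S v (armClass S i₀) w = Fobj S v w i := by
  rw [gtildeC_eq_sInf S v i₀ w hpos, (QfF_nonempty S v i₀ w).csInf_eq_min']
  obtain ⟨i, hi, hval⟩ := Finset.mem_image.mp (Finset.min'_mem _ (QfF_nonempty S v i₀ w))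
  exact ⟨i, (Finset.mem_filter.mp hi).2, hval.symm⟩

lemma armRel_symm (S : Fin M → Finset (Fin K)) : Symmetric (armRel S) := by
  rintro i j ⟨m, h1, h2⟩; exact ⟨m, h2, h1⟩

lemma rtg_of_eqvGen (S : Fin M → Finset (Fin K)) {x y : Fin K}
    (h : Relation.EqvGen (armRel S) x y) : Relation.ReflTransGen (armRel S) x y := by
  induction h with
  | rel a b hab => exact Relation.ReflTransGen.single hab
  | refl a => exact Relation.ReflTransGen.refl
  | symm a b _ ih => exact (@Relation.ReflTransGen.stdSymm _ _ ⟨armRel_symm S⟩).symm _ _ ih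
  | trans a b c _ _ ih1 ih2 => exact ih1.trans ih2

lemma crossing (S : Fin M → Finset (Fin K)) (A : Set (Fin K)) {x y : Fin K}
    (hxy : Relation.ReflTransGen (armRel S) x y) :
    x ∈ A → y ∉ A → ∃ u w, u ∈ A ∧ w ∉ A ∧ armRel S u w := by
  induction hxy with
  | refl => intro hx hy; exact absurd hx hy
  | @tail b c _ hbc ih =>
    intro hx hy
    by_cases hb : b ∈ A
    · exact ⟨b, c, hb, hy, hbc⟩
    · exact ih hx hb

/-- The uniform allocation. -/
lemma unif_mem_Gam (S : Fin M → Finset (Fin K)) (hS : ∀ m, 2 ≤ (S m).card) :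
    (fun m i => if i ∈ S m then ((S m).card : ℝ)⁻¹ else 0) ∈ Gam S := by
  refine ⟨fun m i hi => by simp only [if_pos hi]; positivity, fun m => ?_, fun m i hi => by simp [hi]⟩
  rw [Finset.sum_congr rfl (fun i hi => if_pos hi), Finset.sum_const, nsmul_eq_mul,
    mul_inv_cancel₀]
  have := hS m
  positivity

lemma pos_of_commonSol (S : Fin M → Finset (Fin K)) (v : Fin M → Fin K → ℝ)
    (hS : ∀ m, 2 ≤ (S m).card) (hcov : ∀ i : Fin K, ∃ m, i ∈ S m) (hv : v ∈ PSet S)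
    (ω : Fin M → Fin K → ℝ) (hω : IsCommonSol S v ω) :
    ∀ m, ∀ i ∈ S m, 0 < ω m i := by
  intro m i hi
  rcases lt_or_eq_of_le (hω.1.1 m i hi) with h | h
  · exact h
  exfalso
  -- gtildeC at class of i is 0 for ω
  have hzero : gtildeC S v (armClass S i) ω = 0 := by
    rw [gtildeC, if_pos]
    exact ⟨m, i, hi, Relation.EqvGen.refl i, h.symm⟩
  -- but the uniform allocation achieves a positive value
  set u : Fin M → Fin K → ℝ := fun m i => if i ∈ S m then ((S m).card : ℝ)⁻¹ else 0 with hu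
  have huG : u ∈ Gam S := unif_mem_Gam S hS
  have hupos : ∀ m', ∀ i' ∈ S m', 0 < u m' i' := by
    intro m' i' hi'
    have := hS m'
    simp only [hu, if_pos hi']
    positivity
  have hFpos : ∀ i', 0 < Fobj S v u i' := by
    intro i'
    have hd := delta_pos S v hS hcov hv i'
    have hden := armDenom_pos S u (hcov i') (fun m' hm' => hupos m' i' hm')
    rw [Fobj]; positivity
  obtain ⟨i', hi', hval⟩ := gtildeC_mem S v i u
    (fun m' i' hi' _ => (hupos m' i' hi').ne')
  have h1 : 0 < gtildeC S v (armClass S i) u := hval ▸ hFpos i'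
  have h2 := hω.2.2 i u huG
  rw [hzero] at h2
  linarith

lemma key (S : Fin M → Finset (Fin K)) (v : Fin M → Fin K → ℝ)
    (hS : ∀ m, 2 ≤ (S m).card) (hcov : ∀ i : Fin K, ∃ m, i ∈ S m) (hv : v ∈ PSet S)
    (i₀ : Fin K) (c : ℝ) (hc0 : 0 < c)
    (hmax : ∀ w ∈ Gam S, gtildeC S v (armClass S i₀) w ≤ c) :
    ∀ n : ℕ, ∀ p ∈ Gam S, (∀ m, ∀ i ∈ S m, i ∈ armClass S i₀ → 0 < p m i) →
      gtildeC S v (armClass S i₀) p = c →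
      (∃ e ∈ armClass S i₀, Fobj S v p e ≠ c) →
      ((Finset.univ.filter (· ∈ armClass S i₀)).filter
          (fun i => Fobj S v p i = c)).card = n →
      False := by
  intro n
  induction n using Nat.strong_induction_on with
  | _ n ih =>
  intro p hpG hppos hpval hend hcard
  have hΔ : ∀ i, 0 < Delta S v i := delta_pos S v hS hcov hv
  have hposne : ∀ m, ∀ i ∈ S m, i ∈ armClass S i₀ → p m i ≠ 0 :=
    fun m i hi hQ => (hppos m i hi hQ).ne'
  have hFge : ∀ i ∈ armClass S i₀, c ≤ Fobj S v p i := by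
    intro i hi
    rw [← hpval]; exact gtildeC_le S v i₀ p hposne hi
  obtain ⟨a₀, ha₀Q, ha₀⟩ := gtildeC_mem S v i₀ p hposne
  rw [hpval] at ha₀
  obtain ⟨e, heQ, hene⟩ := hend
  have hrtg : Relation.ReflTransGen (armRel S) a₀ e :=
    rtg_of_eqvGen S (Relation.EqvGen.trans _ _ _ (Relation.EqvGen.symm _ _ ha₀Q) heQ)
  obtain ⟨a, b, haA, hbA, m₀, haS, hbS⟩ :=
    crossing S {i | i ∈ armClass S i₀ ∧ Fobj S v p i = c} hrtg ⟨ha₀Q, ha₀.symm⟩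
      (fun h => hene h.2)
  obtain ⟨haQ, haF⟩ := haA
  have hbQ : b ∈ armClass S i₀ :=
    Relation.EqvGen.trans _ _ _ haQ (Relation.EqvGen.rel _ _ ⟨m₀, haS, hbS⟩)
  have hbF : c < Fobj S v p b :=
    lt_of_le_of_ne (hFge b hbQ) (fun h => hbA ⟨hbQ, h.symm⟩)
  have hab : a ≠ b := by rintro rfl; exact hbF.ne' haF
  have hxa : 0 < p m₀ a := hppos m₀ a haS haQ
  set x := p m₀ b with hxdef
  have hx : 0 < x := hppos m₀ b hbS hbQ
  have hDen : ∀ i, i ∈ armClass S i₀ → 0 < armDenom S p i := fun i hiQ =>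
    armDenom_pos S p (hcov i) (fun m hm => hppos m i hm hiQ)
  have hMb : (0 : ℝ) < (Mi S b : ℝ) := by exact_mod_cast Mi_pos S ⟨m₀, hbS⟩
  have hMa : (0 : ℝ) < (Mi S a : ℝ) := by exact_mod_cast Mi_pos S ⟨m₀, haS⟩
  have hD : 0 < armDenom S p b := hDen b hbQ
  have hDlt : armDenom S p b < Delta S v b ^ 2 / c := by
    have h1 : c * armDenom S p b < Delta S v b ^ 2 := by
      have := hbF; rw [Fobj, lt_div_iff₀ hD] at this; exact this
    rw [lt_div_iff₀ hc0]; linarith [mul_comm c (armDenom S p b)]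
  set gap := Delta S v b ^ 2 / c - armDenom S p b with hgapdef
  have hgap : 0 < gap := sub_pos.mpr hDlt
  set t := min (x / 2) (gap * (Mi S b : ℝ) ^ 2 * x ^ 2 / 4) with htdef
  have ht0 : 0 < t := lt_min (by positivity) (by positivity)
  have htx : t ≤ x / 2 := min_le_left _ _
  have ht2 : t ≤ gap * (Mi S b : ℝ) ^ 2 * x ^ 2 / 4 := min_le_right _ _
  have hxt : 0 < x - t := by linarith
  set q : Fin M → Fin K → ℝ := fun m i => if m = m₀ then
      (if i = a then p m i + t else if i = b then p m i - t else p m i)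
    else p m i with hqdef
  have hq_ne : ∀ m, m ≠ m₀ → ∀ i, q m i = p m i := by
    intro m hm i; simp [hqdef, hm]
  have hq_a : q m₀ a = p m₀ a + t := by simp [hqdef]
  have hq_b : q m₀ b = p m₀ b - t := by simp [hqdef, Ne.symm hab]
  have hq_o : ∀ i, i ≠ a → i ≠ b → q m₀ i = p m₀ i := by
    intro i h1 h2; simp [hqdef, h1, h2]
  -- q is an allocation
  have hqG : q ∈ Gam S := by
    refine ⟨?_, ?_, ?_⟩
    · intro m i hi
      by_cases hm : m = m₀
      · rw [hm]; rw [hm] at hi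
        by_cases h1 : i = a
        · rw [h1, hq_a]; linarith
        by_cases h2 : i = b
        · rw [h2, hq_b, ← hxdef]; linarith
        · rw [hq_o i h1 h2]; exact hpG.1 m₀ i hi
      · rw [hq_ne m hm]; exact hpG.1 m i hi
    · intro m
      by_cases hm : m = m₀
      · rw [hm]
        have hsplit : ∀ i ∈ S m₀,
            q m₀ i = p m₀ i + ((if i = a then t else 0) - (if i = b then t else 0)) := by
          intro i _
          by_cases h1 : i = a
          · rw [h1, hq_a, if_pos rfl, if_neg hab]; ring
          by_cases h2 : i = b
          · rw [h2, hq_b, if_neg (Ne.symm hab), if_pos rfl]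
            ring
          · rw [hq_o i h1 h2, if_neg h1, if_neg h2]; ring
        rw [Finset.sum_congr rfl hsplit, Finset.sum_add_distrib, hpG.2.1 m₀,
          Finset.sum_sub_distrib, Finset.sum_ite_eq' (S m₀) a (fun _ => t),
          Finset.sum_ite_eq' (S m₀) b (fun _ => t), if_pos haS, if_pos hbS]
        ring
      · rw [Finset.sum_congr rfl (fun i _ => hq_ne m hm i)]; exact hpG.2.1 m
    · intro m i hi
      by_cases hm : m = m₀
      · rw [hm]; rw [hm] at hi
        rw [hq_o i (fun h => hi (h ▸ haS)) (fun h => hi (h ▸ hbS))]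
        exact hpG.2.2 m₀ i hi
      · rw [hq_ne m hm]; exact hpG.2.2 m i hi
  -- q is positive on the class
  have hqpos : ∀ m, ∀ i ∈ S m, i ∈ armClass S i₀ → 0 < q m i := by
    intro m i hi hiQ
    by_cases hm : m = m₀
    · rw [hm]; rw [hm] at hi
      by_cases h1 : i = a
      · rw [h1, hq_a]; linarith
      by_cases h2 : i = b
      · rw [h2, hq_b, ← hxdef]; linarith
      · rw [hq_o i h1 h2]; exact hppos m₀ i hi hiQ
    · rw [hq_ne m hm]; exact hppos m i hi hiQ
  have hqposne : ∀ m, ∀ i ∈ S m, i ∈ armClass S i₀ → q m i ≠ 0 :=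
    fun m i hi hQ => (hqpos m i hi hQ).ne'
  -- F is unchanged away from a and b
  have hDenEq : ∀ j, j ≠ a → j ≠ b → armDenom S q j = armDenom S p j := by
    intro j h1 h2
    rw [armDenom, armDenom]
    congr 1
    refine Finset.sum_congr rfl (fun m _ => ?_)
    by_cases hm : m = m₀
    · rw [hm, hq_o j h1 h2]
    · rw [hq_ne m hm]
  have hFother : ∀ j, j ≠ a → j ≠ b → Fobj S v q j = Fobj S v p j := by
    intro j h1 h2; rw [Fobj, Fobj, hDenEq j h1 h2]
  -- F strictly increases at a
  have hm₀a : m₀ ∈ Finset.univ.filter (fun m => a ∈ S m) := by simp [haS]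
  have hsum_a : ∑ m ∈ Finset.univ.filter (fun m => a ∈ S m), 1 / q m a
      < ∑ m ∈ Finset.univ.filter (fun m => a ∈ S m), 1 / p m a := by
    refine Finset.sum_lt_sum (fun m _ => ?_) ⟨m₀, hm₀a, ?_⟩
    · by_cases hm : m = m₀
      · rw [hm, hq_a]
        exact one_div_le_one_div_of_le hxa (by linarith)
      · rw [hq_ne m hm]
    · rw [hq_a]
      exact one_div_lt_one_div_of_lt hxa (by linarith)
  have hden_a_lt : armDenom S q a < armDenom S p a := by
    rw [armDenom, armDenom]
    exact mul_lt_mul_of_pos_left hsum_a (one_div_pos.mpr (pow_pos hMa 2))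
  have hden_qa : 0 < armDenom S q a :=
    armDenom_pos S q (hcov a) (fun m hm => hqpos m a hm haQ)
  have hFa : c < Fobj S v q a := by
    rw [← haF]
    exact div_lt_div_of_pos_left (pow_pos (hΔ a) 2) hden_qa hden_a_lt
  -- F stays above c at b
  have hm₀b : m₀ ∈ Finset.univ.filter (fun m => b ∈ S m) := by simp [hbS]
  have hsum_b : ∑ m ∈ Finset.univ.filter (fun m => b ∈ S m), 1 / q m b
      = (∑ m ∈ Finset.univ.filter (fun m => b ∈ S m), 1 / p m b)
        + (1 / (x - t) - 1 / x) := by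
    have herase : ∑ m ∈ (Finset.univ.filter (fun m => b ∈ S m)).erase m₀, 1 / q m b
        = ∑ m ∈ (Finset.univ.filter (fun m => b ∈ S m)).erase m₀, 1 / p m b :=
      Finset.sum_congr rfl (fun m hm => by rw [hq_ne m (Finset.ne_of_mem_erase hm)])
    rw [← Finset.add_sum_erase _ (fun m => 1 / q m b) hm₀b,
      ← Finset.add_sum_erase _ (fun m => 1 / p m b) hm₀b, herase, hq_b, ← hxdef]
    ring
  have hden_b : armDenom S q b
      = armDenom S p b + 1 / (Mi S b : ℝ) ^ 2 * (1 / (x - t) - 1 / x) := by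
    rw [armDenom, armDenom, hsum_b]; ring
  have hsmall : 1 / (Mi S b : ℝ) ^ 2 * (1 / (x - t) - 1 / x) < gap := by
    have e1 : 1 / (x - t) - 1 / x = t / (x * (x - t)) := by
      field_simp
      ring_nf
      try exact Or.inl trivial
    have e2 : t / (x * (x - t)) ≤ 2 * t / x ^ 2 := by
      rw [div_le_div_iff₀ (by positivity) (by positivity)]
      have hxx : t * x ≤ (x / 2) * x := mul_le_mul_of_nonneg_right htx hx.le
      nlinarith
    have e3 : 1 / (Mi S b : ℝ) ^ 2 * (2 * t / x ^ 2) ≤ gap / 2 := by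
      calc 1 / (Mi S b : ℝ) ^ 2 * (2 * t / x ^ 2)
          = t * (2 / ((Mi S b : ℝ) ^ 2 * x ^ 2)) := by ring
        _ ≤ (gap * (Mi S b : ℝ) ^ 2 * x ^ 2 / 4) * (2 / ((Mi S b : ℝ) ^ 2 * x ^ 2)) := by
            exact mul_le_mul_of_nonneg_right ht2 (by positivity)
        _ = gap / 2 := by field_simp; ring
    have e4 : 1 / (Mi S b : ℝ) ^ 2 * (1 / (x - t) - 1 / x)
        ≤ 1 / (Mi S b : ℝ) ^ 2 * (2 * t / x ^ 2) := by
      refine mul_le_mul_of_nonneg_left ?_ (by positivity)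
      rw [e1]; exact e2
    linarith
  have hden_qb : 0 < armDenom S q b :=
    armDenom_pos S q (hcov b) (fun m hm => hqpos m b hm hbQ)
  have hFb' : c < Fobj S v q b := by
    have hlt : armDenom S q b < Delta S v b ^ 2 / c := by
      rw [hden_b]; rw [hgapdef] at hsmall; linarith
    rw [Fobj, lt_div_iff₀ hden_qb]
    have := (lt_div_iff₀ hc0).mp hlt
    linarith [mul_comm (armDenom S q b) c]
  -- q attains the same optimal value c
  have hqval : gtildeC S v (armClass S i₀) q = c := by
    refine le_antisymm (hmax q hqG) (le_gtildeC S v i₀ q hqposne ?_)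
    intro i hi
    by_cases h1 : i = a
    · subst h1; exact le_of_lt hFa
    by_cases h2 : i = b
    · subst h2; exact le_of_lt hFb'
    · rw [hFother i h1 h2]; exact hFge i hi
  -- argmin set of q is that of p minus a
  have haAf : a ∈ (Finset.univ.filter (· ∈ armClass S i₀)).filter
      (fun i => Fobj S v p i = c) := by
    simp only [Finset.mem_filter, Finset.mem_univ, true_and]
    exact ⟨haQ, haF⟩
  have hAq : (Finset.univ.filter (· ∈ armClass S i₀)).filter (fun i => Fobj S v q i = c)
      = ((Finset.univ.filter (· ∈ armClass S i₀)).filter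
          (fun i => Fobj S v p i = c)).erase a := by
    ext i
    simp only [Finset.mem_erase, Finset.mem_filter, Finset.mem_univ, true_and]
    constructor
    · rintro ⟨hiQ, hiF⟩
      have hia : i ≠ a := by rintro rfl; exact hFa.ne' hiF
      have hib : i ≠ b := by rintro rfl; exact hFb'.ne' hiF
      exact ⟨hia, hiQ, by rw [← hFother i hia hib]; exact hiF⟩
    · rintro ⟨hia, hiQ, hiF⟩
      have hib : i ≠ b := by rintro rfl; exact hbF.ne' hiF
      exact ⟨hiQ, by rw [hFother i hia hib]; exact hiF⟩
  have hn0 : 0 < n := hcard ▸ Finset.card_pos.mpr ⟨a, haAf⟩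
  refine ih (n - 1) (by omega) q hqG hqpos hqval ⟨b, hbQ, hFb'.ne'⟩ ?_
  rw [hAq, Finset.card_erase_of_mem haAf, hcard]
/-- Lemma 11: a common solution satisfies the pseudo-balanced condition. -/
theorem stmt7 (K M : ℕ) (hK : 2 ≤ K) (hM : 1 ≤ M) (S : Fin M → Finset (Fin K))
    (hS : ∀ m, 2 ≤ (S m).card) (hcov : ∀ i : Fin K, ∃ m, i ∈ S m)
    (v : Fin M → Fin K → ℝ) (hv : v ∈ PSet S)
    (ω : Fin M → Fin K → ℝ) (hω : IsCommonSol S v ω) :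
    PseudoBalancedCond S v ω := by
  have hpos : ∀ m, ∀ i ∈ S m, 0 < ω m i := pos_of_commonSol S v hS hcov hv ω hω
  unfold PseudoBalancedCond
  intro i₁ i₂ h12
  have hposne : ∀ m, ∀ i ∈ S m, i ∈ armClass S i₁ → ω m i ≠ 0 :=
    fun m i hi _ => (hpos m i hi).ne'
  set c := gtildeC S v (armClass S i₁) ω with hc
  obtain ⟨i', hi', hval⟩ := gtildeC_mem S v i₁ ω hposne
  have hΔ := delta_pos S v hS hcov hv
  have hc0 : 0 < c := by
    rw [hc, hval, Fobj]
    have hΔ' := hΔ i'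
    have hden := armDenom_pos S ω (hcov i') (fun m hm => hpos m i' hm)
    positivity
  have hmax : ∀ w ∈ Gam S, gtildeC S v (armClass S i₁) w ≤ c :=
    fun w hw => hω.2.2 i₁ w hw
  have hconst : ∀ i ∈ armClass S i₁, Fobj S v ω i = c := by
    by_contra h
    push_neg at h
    exact key S v hS hcov hv i₁ c hc0 hmax _ ω hω.1
      (fun m i hi _ => hpos m i hi) hc.symm h rfl
  have h1 := hconst i₁ (Relation.EqvGen.refl i₁)
  have h2 := hconst i₂ h12
  exact h1.trans h2.symm

end

end HetTS
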